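/- arXiv:1806.09760 — 7 statements merged into one kernel-verified Lean document; each statement's English description precedes it below -/
import Mathlib

section
/- The two-density formula (Fp ∧ Fq) → F(Fp ∧ Fq), where p and q are distinct propositional variables, is valid on the frame (ℝ², ≺): for every valuation v and every point w ∈ ℝ², w satisfies (Fp ∧ Fq) → F(Fp ∧ Fq). -/
/-- Formulas of the basic temporal language. -/
inductive Formula : Type
  | var : ℕ → Formula
  | neg : Formula → Formula
  | or : Formula → Formula → Formula
  | F : Formula → Formula
  | P : Formula → Formula

/-- Satisfaction of a formula at a world, given a frame `(W, R)` and valuation `v`. -/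
def Sat {W : Type} (R : W → W → Prop) (v : ℕ → Set W) : W → Formula → Prop
  | w, Formula.var n => w ∈ v n
  | w, Formula.neg φ => ¬ Sat R v w φ
  | w, Formula.or φ ψ => Sat R v w φ ∨ Sat R v w ψ
  | w, Formula.F φ => ∃ u, R w u ∧ Sat R v u φ
  | w, Formula.P φ => ∃ u, R u w ∧ Sat R v u φ

/-- Validity of a formula on a frame. -/
def Valid {W : Type} (R : W → W → Prop) (φ : Formula) : Prop :=
  ∀ (v : ℕ → Set W) (w : W), Sat R v w φ

/-- The irreflexive slower-than-light relation on ℝ². -/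
def slt (a b : ℝ × ℝ) : Prop := a.1 < b.1 ∧ a.2 < b.2

/-- An injective encoding of formulas as natural numbers. -/
def Formula.enc : Formula → ℕ
  | Formula.var n => Nat.pair 0 n
  | Formula.neg φ => Nat.pair 1 φ.enc
  | Formula.or φ ψ => Nat.pair 2 (Nat.pair φ.enc ψ.enc)
  | Formula.F φ => Nat.pair 3 φ.enc
  | Formula.P φ => Nat.pair 4 φ.enc

/-- Conjunction, as the abbreviation `¬(¬φ ∨ ¬ψ)`. -/
def Formula.and (φ ψ : Formula) : Formula := Formula.neg (Formula.or (Formula.neg φ) (Formula.neg ψ))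

/-- Implication, as the abbreviation `¬φ ∨ ψ`. -/
def Formula.imp (φ ψ : Formula) : Formula := Formula.or (Formula.neg φ) ψ

/-- The two-density formula `(Fp ∧ Fq) → F(Fp ∧ Fq)` with distinct variables `p = var 0`,
`q = var 1`. -/
def twoDensity : Formula :=
  Formula.imp
    (Formula.and (Formula.F (Formula.var 0)) (Formula.F (Formula.var 1)))
    (Formula.F (Formula.and (Formula.F (Formula.var 0)) (Formula.F (Formula.var 1))))

/-- The two-density formula is valid on `(ℝ², ≺)`. -/
theorem twoDensity_valid_slt :
    ∀ (v : ℕ → Set (ℝ × ℝ)) (w : ℝ × ℝ), Sat slt v w twoDensity := by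
  intro v w
  simp only [twoDensity, Formula.imp, Formula.and, Sat]
  push_neg
  by_cases h1 : ∃ u, slt w u ∧ u ∈ v 0
  case neg => exact Or.inl (Or.inl (by push_neg at h1; exact h1))
  by_cases h2 : ∃ u, slt w u ∧ u ∈ v 1
  case neg => exact Or.inl (Or.inr (by push_neg at h2; exact h2))
  obtain ⟨u, ⟨hu1, hu2⟩, hup⟩ := h1
  obtain ⟨u', ⟨hu'1, hu'2⟩, hu'q⟩ := h2
  refine Or.inr ⟨((w.1 + min u.1 u'.1)/2, (w.2 + min u.2 u'.2)/2), ⟨?_, ?_⟩, ?_, ?_⟩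
  · simpa using by linarith [min_le_left u.1 u'.1, lt_min hu1 hu'1]
  · simpa using by linarith [min_le_left u.2 u'.2, lt_min hu2 hu'2]
  · exact ⟨u, ⟨by simpa using by linarith [min_le_left u.1 u'.1],
      by simpa using by linarith [min_le_left u.2 u'.2]⟩, hup⟩
  · exact ⟨u', ⟨by simpa using by linarith [min_le_right u.1 u'.1],
      by simpa using by linarith [min_le_right u.2 u'.2]⟩, hu'q⟩
end

section
/- The two-density formula (Fp ∧ Fq) → F(Fp ∧ Fq), where p and q are distinct propositional variables, is not valid on the frame (ℝ², <), where (x,y) < (x',y') iff x ≤ x', y ≤ y', and (x,y) ≠ (x',y'): there exist a valuation v and a point w ∈ ℝ² at which the formula fails. -/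
/-- The irreflexive lightspeed-or-slower relation on ℝ². -/
def ltLight (a b : ℝ × ℝ) : Prop := a.1 ≤ b.1 ∧ a.2 ≤ b.2 ∧ a ≠ b

/-- The two-density formula is not valid on `(ℝ², <)` with the irreflexive
lightspeed-or-slower relation: it fails at some point under some valuation. -/
theorem twoDensity_not_valid_ltLight :
    ∃ (v : ℕ → Set (ℝ × ℝ)) (w : ℝ × ℝ), ¬ Sat ltLight v w twoDensity := by
  refine ⟨fun n => if n = 0 then {((1:ℝ), (0:ℝ))} else if n = 1 then {((0:ℝ), (1:ℝ))} else ∅,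
    ((0:ℝ), (0:ℝ)), ?_⟩
  simp only [twoDensity, Formula.imp, Formula.and, Sat, not_or, not_not, not_exists]
  refine ⟨⟨fun h => h ((1:ℝ),(0:ℝ)) ⟨⟨by norm_num, by norm_num, by norm_num [Prod.ext_iff]⟩, by simp⟩,
    fun h => h ((0:ℝ),(1:ℝ)) ⟨⟨by norm_num, by norm_num, by norm_num [Prod.ext_iff]⟩, by simp⟩⟩, ?_⟩
  rintro ⟨a, b⟩ ⟨⟨h1, h2, hne⟩, hFp, hFq⟩
  push_neg at hFp hFq
  obtain ⟨p, ⟨hp1, hp2, _⟩, hpv⟩ := hFp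
  obtain ⟨q, ⟨hq1, hq2, _⟩, hqv⟩ := hFq
  simp only [if_pos, Set.mem_singleton_iff] at hpv
  simp only [if_neg one_ne_zero, if_pos, Set.mem_singleton_iff] at hqv
  subst hpv hqv
  simp only at hp1 hp2 hq1 hq2 h1 h2
  have ha : a = 0 := le_antisymm hq1 h1
  have hb : b = 0 := le_antisymm hp2 h2
  exact hne (by simp [ha, hb])
end

section
/- Let M be a finite preordered type, let x ∈ ℝ², let U be an open neighborhood of x in ℝ², and let f : ℝ² → M satisfy f(a) ≤ f(b) whenever a, b ∈ U ∩ ↑x and a ≺ b, where ↑x = {y ∈ ℝ² | x ≺ y}. Then there exist m ∈ M and an open neighborhood U' ⊆ U of x such that f(y) ≤ m and m ≤ f(y) for every y ∈ U' ∩ ↑x. Moreover m is unique up to equivalence: if m' ∈ M and an open neighborhood U'' ⊆ U of x also have this property, then m ≤ m' and m' ≤ m. -/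
/-- The strict future cone `↑x = {y | x ≺ y}`. -/
def up (x : ℝ × ℝ) : Set (ℝ × ℝ) := {y | slt x y}

/-- Existence and uniqueness (up to cluster equivalence) of the limiting value `f⁺(x)`:
if `f` is preorder-preserving on a neighborhood of `x` intersected with the future cone of `x`,
then `f` takes values equivalent to a single `m` on some smaller such neighborhood, and this
`m` is unique up to equivalence. -/
theorem fplus_exists_unique {M : Type} [Fintype M] [Preorder M]
    (x : ℝ × ℝ) (U : Set (ℝ × ℝ)) (hUopen : IsOpen U) (hxU : x ∈ U)
    (f : ℝ × ℝ → M)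
    (hf : ∀ a ∈ U ∩ up x, ∀ b ∈ U ∩ up x, slt a b → f a ≤ f b) :
    ∃ m : M, ∃ U' : Set (ℝ × ℝ), U' ⊆ U ∧ IsOpen U' ∧ x ∈ U' ∧
      (∀ y ∈ U' ∩ up x, f y ≤ m ∧ m ≤ f y) ∧
      (∀ (m' : M) (U'' : Set (ℝ × ℝ)), U'' ⊆ U → IsOpen U'' → x ∈ U'' →
        (∀ y ∈ U'' ∩ up x, f y ≤ m' ∧ m' ≤ f y) → (m ≤ m' ∧ m' ≤ m)) := by
  -- approximating sequence
  set a : ℕ → ℝ × ℝ := fun n => (x.1 + 1 / (n + 1), x.2 + 1 / (n + 1)) with ha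
  have hpos : ∀ n : ℕ, (0 : ℝ) < 1 / (n + 1) := fun n => by positivity
  have haup : ∀ n, a n ∈ up x := by
    intro n
    exact ⟨lt_add_of_pos_right _ (hpos n), lt_add_of_pos_right _ (hpos n)⟩
  have hdist : ∀ n, dist (a n) x = 1 / (n + 1) := by
    intro n
    simp [ha, Prod.dist_eq, Real.dist_eq, abs_of_pos (hpos n)]
    positivity
  obtain ⟨ε, hε, hball⟩ := Metric.isOpen_iff.1 hUopen x hxU
  obtain ⟨N₀, hN₀⟩ := exists_nat_gt (1 / ε)
  have hsmall : ∀ n, N₀ ≤ n → (1 : ℝ) / (n + 1) < ε := by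
    intro n hn
    rw [div_lt_iff₀ (by positivity)]
    have h1 : 1 / ε < (n : ℝ) + 1 := by
      have : (N₀ : ℝ) ≤ (n : ℝ) := by exact_mod_cast hn
      linarith
    calc (1 : ℝ) = ε * (1 / ε) := by field_simp
      _ < ε * ((n : ℝ) + 1) := mul_lt_mul_of_pos_left h1 hε
  have haU : ∀ n, N₀ ≤ n → a n ∈ U := by
    intro n hn
    apply hball
    rw [Metric.mem_ball, hdist]
    exact hsmall n hn
  have hlt : ∀ {n k : ℕ}, n < k → (1 : ℝ) / (k + 1) < 1 / (n + 1) := by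
    intro n k h
    apply one_div_lt_one_div_of_lt (by positivity)
    exact_mod_cast Nat.succ_lt_succ h
  -- monotonicity along the sequence
  have hmono : ∀ n k, N₀ ≤ n → n ≤ k → f (a k) ≤ f (a n) := by
    intro n k hn hnk
    rcases eq_or_lt_of_le hnk with rfl | h
    · exact le_refl _
    · exact hf _ ⟨haU k (hn.trans hnk), haup k⟩ _ ⟨haU n hn, haup n⟩
        ⟨by simpa [ha] using hlt h, by simpa [ha] using hlt h⟩
  -- a value hit infinitely often
  obtain ⟨m, hm⟩ := Finite.exists_infinite_fiber (fun n : ℕ => f (a (N₀ + n)))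
  have hminf : {n : ℕ | f (a (N₀ + n)) = m}.Infinite := by
    rw [← Set.infinite_coe_iff]; exact hm
  have hlow : ∀ n, m ≤ f (a (N₀ + n)) := by
    intro n
    obtain ⟨k, hk, hnk⟩ := hminf.exists_gt n
    calc m = f (a (N₀ + k)) := hk.symm
      _ ≤ f (a (N₀ + n)) := hmono _ _ (Nat.le_add_right _ _) (by omega)
  have hlow' : ∀ n, N₀ ≤ n → m ≤ f (a n) := by
    intro n hn
    obtain ⟨k, rfl⟩ := Nat.exists_eq_add_of_le hn
    exact hlow k
  obtain ⟨N₁, hN₁, -⟩ := hminf.exists_gt 0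
  set N := N₀ + N₁ with hN
  have hhigh : ∀ n, N ≤ n → f (a n) ≤ m := by
    intro n hn
    calc f (a n) ≤ f (a N) := hmono N n (Nat.le_add_right _ _) hn
      _ = m := hN₁
  set δ : ℝ := 1 / (N + 1) with hδ
  have hδε : δ < ε := hsmall N (Nat.le_add_right _ _)
  have hmain : ∀ y ∈ Metric.ball x δ ∩ up x, f y ≤ m ∧ m ≤ f y := by
    rintro y ⟨hy1, hy2⟩
    have hyU : y ∈ U := hball (Metric.ball_subset_ball hδε.le hy1)
    have hd : max (dist y.1 x.1) (dist y.2 x.2) < δ := by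
      rw [← Prod.dist_eq]; exact hy1
    have hg1 : y.1 - x.1 < δ := by
      have := (abs_lt.1 (lt_of_le_of_lt (le_max_left _ _) hd)).2
      simpa [Real.dist_eq] using this
    have hg2 : y.2 - x.2 < δ := by
      have := (abs_lt.1 (lt_of_le_of_lt (le_max_right _ _) hd)).2
      simpa [Real.dist_eq] using this
    constructor
    · -- f y ≤ f (a N) = m
      have hslt : slt y (a N) := ⟨by simp only [ha]; linarith, by simp only [ha]; linarith⟩
      calc f y ≤ f (a N) := hf _ ⟨hyU, hy2⟩ _ ⟨haU N (Nat.le_add_right _ _), haup N⟩ hslt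
        _ ≤ m := hhigh N le_rfl
    · -- find small k with a k ≺ y
      obtain ⟨g1pos, g2pos⟩ : 0 < y.1 - x.1 ∧ 0 < y.2 - x.2 := by
        rcases hy2 with ⟨h1, h2⟩; constructor <;> linarith
      obtain ⟨k, hk⟩ := exists_nat_gt (max (1 / (y.1 - x.1)) (1 / (y.2 - x.2)) + N₀)
      have hkN₀ : N₀ ≤ k := by
        have h0 : (0:ℝ) ≤ max (1 / (y.1 - x.1)) (1 / (y.2 - x.2)) :=
          le_max_of_le_left (by positivity)
        have : (N₀ : ℝ) < (k : ℝ) := by linarith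
        exact_mod_cast this.le
      have hk1 : (1:ℝ) / (k + 1) < y.1 - x.1 := by
        rw [div_lt_iff₀ (by positivity), ← div_lt_iff₀' g1pos]
        have := le_max_left (1 / (y.1 - x.1)) (1 / (y.2 - x.2))
        have h0 : (0:ℝ) ≤ (N₀:ℝ) := Nat.cast_nonneg _
        linarith
      have hk2 : (1:ℝ) / (k + 1) < y.2 - x.2 := by
        rw [div_lt_iff₀ (by positivity), ← div_lt_iff₀' g2pos]
        have := le_max_right (1 / (y.1 - x.1)) (1 / (y.2 - x.2))
        have h0 : (0:ℝ) ≤ (N₀:ℝ) := Nat.cast_nonneg _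
        linarith
      have hslt : slt (a k) y := ⟨by simp only [ha]; linarith, by simp only [ha]; linarith⟩
      calc m ≤ f (a k) := hlow' k hkN₀
        _ ≤ f y := hf _ ⟨haU k hkN₀, haup k⟩ _ ⟨hyU, hy2⟩ hslt
  refine ⟨m, Metric.ball x δ, fun y hy => hball (Metric.ball_subset_ball hδε.le hy),
    Metric.isOpen_ball, Metric.mem_ball_self (hpos N), hmain, ?_⟩
  intro m' U'' hU''U hU''open hxU'' hm'
  obtain ⟨ε', hε', hball'⟩ := Metric.isOpen_iff.1 hU''open x hxU''
  obtain ⟨K, hK⟩ := exists_nat_gt (1 / min δ ε')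
  have hmin : (0:ℝ) < min δ ε' := lt_min (hpos N) hε'
  have hKsmall : (1:ℝ) / (K + 1) < min δ ε' := by
    rw [div_lt_iff₀ (by positivity)]
    have h1 : 1 / min δ ε' < (K : ℝ) + 1 := by linarith
    calc (1 : ℝ) = min δ ε' * (1 / min δ ε') := by field_simp
      _ < min δ ε' * ((K : ℝ) + 1) := mul_lt_mul_of_pos_left h1 hmin
  have hyδ : a K ∈ Metric.ball x δ := by
    rw [Metric.mem_ball, hdist]; exact hKsmall.trans_le (min_le_left _ _)
  have hyε' : a K ∈ U'' := by
    apply hball'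
    rw [Metric.mem_ball, hdist]; exact hKsmall.trans_le (min_le_right _ _)
  obtain ⟨h1, h2⟩ := hmain (a K) ⟨hyδ, haup K⟩
  obtain ⟨h3, h4⟩ := hm' (a K) ⟨hyε', haup K⟩
  exact ⟨h2.trans h3, h4.trans h1⟩
end

section
/- Let M be a finite preordered type and f : ℝ² → M satisfy f(a) ≤ f(b) whenever a ≺ b. Let y, x, x' ∈ ℝ with x ≤ x', and set p = (x,y) and p' = (x',y). Suppose m ∈ M and an open neighborhood U of p satisfy f(z) ≤ m and m ≤ f(z) for all z ∈ U ∩ ↑p, and suppose m' ∈ M and an open neighborhood U' of p' satisfy f(z) ≤ m' and m' ≤ f(z) for all z ∈ U' ∩ ↑p'. Then m ≤ m'. -/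
/-!
Points of the future cone close to `(x, y)` are reached along the diagonal `(x + t, y + t)`,
`t ↓ 0`. Taking `z = (x, y) + (t/2, t/2) ∈ U` and `z' = (x', y) + (t, t) ∈ U'` for small `t > 0`
gives `z ≺ z'`, hence `m ≤ f z ≤ f z' ≤ m'`.
-/

open Filter Topology

lemma add_diag_mem_up {p : ℝ × ℝ} {t : ℝ} (ht : 0 < t) : p + (t, t) ∈ up p :=
  ⟨lt_add_of_pos_right _ ht, lt_add_of_pos_right _ ht⟩

lemma slt_add_diag {p p' : ℝ × ℝ} (hp : p ≤ p') {s t : ℝ} (hst : s < t) :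
    slt (p + (s, s)) (p' + (t, t)) :=
  ⟨add_lt_add_of_le_of_lt hp.1 hst, add_lt_add_of_le_of_lt hp.2 hst⟩

lemma eventually_add_diag_mem {p : ℝ × ℝ} {U : Set (ℝ × ℝ)} (hU : U ∈ 𝓝 p) :
    ∀ᶠ t in 𝓝 (0 : ℝ), p + (t, t) ∈ U := by
  have hcont : Continuous fun t : ℝ => p + (t, t) := by fun_prop
  exact hcont.tendsto' 0 p (by simp) hU

lemma exists_slt_of_mem_nhds {p p' : ℝ × ℝ} (hp : p ≤ p') {U U' : Set (ℝ × ℝ)}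
    (hU : U ∈ 𝓝 p) (hU' : U' ∈ 𝓝 p') :
    ∃ z ∈ U ∩ up p, ∃ z' ∈ U' ∩ up p', slt z z' := by
  have hhalf : Tendsto (fun t : ℝ => t / 2) (𝓝 0) (𝓝 0) := by
    simpa using (tendsto_id (x := 𝓝 (0 : ℝ))).div_const 2
  have hnear : ∀ᶠ t in 𝓝[>] (0 : ℝ), p + (t / 2, t / 2) ∈ U ∧ p' + (t, t) ∈ U' :=
    nhdsWithin_le_nhds <|
      (hhalf.eventually (eventually_add_diag_mem hU)).and (eventually_add_diag_mem hU')
  obtain ⟨t, ⟨hzU, hz'U'⟩, ht : 0 < t⟩ := (hnear.and self_mem_nhdsWithin).exists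
  exact ⟨_, ⟨hzU, add_diag_mem_up (half_pos ht)⟩, _, ⟨hz'U', add_diag_mem_up ht⟩,
    slt_add_diag hp (half_lt_self ht)⟩

theorem fplus_mono_horizontal_general {M : Type} [Preorder M]
    (f : ℝ × ℝ → M) (hf : ∀ a b : ℝ × ℝ, slt a b → f a ≤ f b)
    (y x x' : ℝ) (hxx' : x ≤ x') (m m' : M) (U U' : Set (ℝ × ℝ))
    (hUopen : IsOpen U) (hpU : (x, y) ∈ U)
    (hm : ∀ z ∈ U ∩ up (x, y), f z ≤ m ∧ m ≤ f z)
    (hU'open : IsOpen U') (hp'U' : (x', y) ∈ U')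
    (hm' : ∀ z ∈ U' ∩ up (x', y), f z ≤ m' ∧ m' ≤ f z) :
    m ≤ m' := by
  obtain ⟨z, hz, z', hz', hzz'⟩ :=
    exists_slt_of_mem_nhds (Prod.mk_le_mk.2 ⟨hxx', le_rfl⟩)
      (hUopen.mem_nhds hpU) (hU'open.mem_nhds hp'U')
  calc m ≤ f z := (hm z hz).2
    _ ≤ f z' := hf z z' hzz'
    _ ≤ m' := (hm' z' hz').1

/-- Monotonicity of `f⁺` along a horizontal line: if `x ≤ x'`, `m` is the limiting value of `f`
on the future cone at `(x, y)`, and `m'` is the limiting value at `(x', y)`, then `m ≤ m'`. -/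
theorem fplus_mono_horizontal {M : Type} [Fintype M] [Preorder M]
    (f : ℝ × ℝ → M) (hf : ∀ a b : ℝ × ℝ, slt a b → f a ≤ f b)
    (y x x' : ℝ) (hxx' : x ≤ x') (m m' : M) (U U' : Set (ℝ × ℝ))
    (hUopen : IsOpen U) (hpU : (x, y) ∈ U)
    (hm : ∀ z ∈ U ∩ up (x, y), f z ≤ m ∧ m ≤ f z)
    (hU'open : IsOpen U') (hp'U' : (x', y) ∈ U')
    (hm' : ∀ z ∈ U' ∩ up (x', y), f z ≤ m' ∧ m' ≤ f z) :
    m ≤ m' :=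
  fplus_mono_horizontal_general f hf y x x' hxx' m m' U U' hUopen hpU hm hU'open hp'U' hm'
end

section
/- Let M be a finite preordered type and f : ℝ² → M satisfy f(a) ≤ f(b) whenever a ≺ b. Let a < b be reals, y ∈ ℝ, and m ∈ M. Suppose that for every s with a < s < b there is an open neighborhood U of (s,y) such that f(z) ≤ m and m ≤ f(z) for all z ∈ U ∩ ↑(s,y). Then there is an open neighborhood U of (a,y) such that f(z) ≤ m and m ≤ f(z) for all z ∈ U ∩ ↑(a,y). -/
/-- If `f⁺` is constantly (the cluster of) `m` on the open horizontal segment from `(a, y)`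
to `(b, y)`, then `f⁺` equals `m` at the left endpoint `(a, y)` as well. -/
theorem fplus_constant_extends_to_left_end {M : Type} [Fintype M] [Preorder M]
    (f : ℝ × ℝ → M) (hf : ∀ p q : ℝ × ℝ, slt p q → f p ≤ f q)
    (a b : ℝ) (hab : a < b) (y : ℝ) (m : M)
    (h : ∀ s : ℝ, a < s → s < b →
      ∃ U : Set (ℝ × ℝ), IsOpen U ∧ (s, y) ∈ U ∧
        ∀ z ∈ U ∩ up (s, y), f z ≤ m ∧ m ≤ f z) :
    ∃ U : Set (ℝ × ℝ), IsOpen U ∧ (a, y) ∈ U ∧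
      ∀ z ∈ U ∩ up (a, y), f z ≤ m ∧ m ≤ f z := by
  have has : a < (a + b) / 2 := by linarith
  have hsb : (a + b) / 2 < b := by linarith
  obtain ⟨U, hU, hsU, hUm⟩ := h ((a + b) / 2) has hsb
  obtain ⟨δ, hδ, hball⟩ := Metric.isOpen_iff.mp hU _ hsU
  refine ⟨Set.Iio ((a + b) / 2) ×ˢ Set.Iio (y + δ / 2),
    (isOpen_Iio.prod isOpen_Iio), ⟨by simpa using has, by simp; linarith⟩, ?_⟩
  rintro ⟨x, t⟩ ⟨⟨hx, ht⟩, hax, hyt⟩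
  simp only [Set.mem_Iio] at hx ht
  constructor
  · -- f (x,t) ≤ m
    have hq : (((a + b) / 2 + δ / 2, y + δ / 2) : ℝ × ℝ) ∈ U ∩ up ((a + b) / 2, y) := by
      constructor
      · apply hball
        rw [Metric.mem_ball, Prod.dist_eq]
        simp only [Real.dist_eq]
        rw [show (a + b) / 2 + δ / 2 - (a + b) / 2 = δ / 2 by ring,
          show y + δ / 2 - y = δ / 2 by ring,
          abs_of_nonneg (by positivity : (0:ℝ) ≤ δ / 2)]
        simp; linarith
      · exact ⟨by simp; linarith, by simp; linarith⟩
    exact le_trans (hf (x, t) _ ⟨by simp; linarith, by simp; linarith⟩) (hUm _ hq).1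
  · -- m ≤ f (x,t)
    have hax' : a < x := hax
    have hyt' : y < t := hyt
    set s' : ℝ := min ((a + x) / 2) ((a + b) / 2) with hs'
    have has' : a < s' := lt_min (by linarith) (by linarith)
    have hs'b : s' < b := lt_of_le_of_lt (min_le_right _ _) hsb
    have hs'x : s' < x := lt_of_le_of_lt (min_le_left _ _) (by linarith)
    obtain ⟨V, hV, hsV, hVm⟩ := h s' has' hs'b
    obtain ⟨δ', hδ', hball'⟩ := Metric.isOpen_iff.mp hV _ hsV
    set ε : ℝ := min (δ' / 2) (min ((x - s') / 2) ((t - y) / 2)) with hε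
    have hε0 : 0 < ε := lt_min (by positivity) (lt_min (by linarith) (by linarith))
    have hεδ : ε < δ' := lt_of_le_of_lt (min_le_left _ _) (by linarith)
    have hεx : s' + ε < x := by
      have h1 : ε ≤ (x - s') / 2 :=
        le_trans (min_le_right (δ' / 2) _) (min_le_left _ _)
      linarith
    have hεt : y + ε < t := by
      have h1 : ε ≤ (t - y) / 2 :=
        le_trans (min_le_right (δ' / 2) _) (min_le_right _ _)
      linarith
    have hp : ((s' + ε, y + ε) : ℝ × ℝ) ∈ V ∩ up (s', y) := by
      constructor
      · apply hball'
        rw [Metric.mem_ball, Prod.dist_eq]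
        simp only [Real.dist_eq]
        rw [show s' + ε - s' = ε by ring, show y + ε - y = ε by ring,
          abs_of_nonneg hε0.le]
        simpa using hεδ
      · exact ⟨by simp; linarith, by simp; linarith⟩
    exact le_trans (hVm _ hp).2 (hf _ (x, t) ⟨by simpa using hεx, by simpa using hεt⟩)
end

section
/- Let A ⊆ ℝ² be downward closed with respect to ≺, i.e., if a ∈ A and b ≺ a then b ∈ A. Then the topological frontier of A is a chain under the northwest order ◁: for any two distinct points p, q in the frontier of A, either p ◁ q or q ◁ p. -/
/-- The northwest partial order on ℝ². -/
def nw (a b : ℝ × ℝ) : Prop := a.1 ≤ b.1 ∧ a.2 ≥ b.2 ∧ a ≠ b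

lemma not_slt_frontier (A : Set (ℝ × ℝ))
    (hA : ∀ a ∈ A, ∀ b : ℝ × ℝ, slt b a → b ∈ A)
    (p q : ℝ × ℝ) (hp : p ∈ frontier A) (hq : q ∈ frontier A) : ¬ slt p q := by
  intro hslt
  -- q is in the closure of A
  have hqc : q ∈ closure A := hq.1
  -- the open set of points strictly exceeding p contains q, so meets A
  have hopen : IsOpen {b : ℝ × ℝ | p.1 < b.1 ∧ p.2 < b.2} :=
    (isOpen_lt continuous_const continuous_fst).inter
      (isOpen_lt continuous_const continuous_snd)
  obtain ⟨a, ha1, ha2⟩ := (mem_closure_iff.mp hqc) _ hopen hslt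
  -- now the open set of points strictly below a is contained in A and contains p
  have hopen2 : IsOpen {b : ℝ × ℝ | b.1 < a.1 ∧ b.2 < a.2} :=
    (isOpen_lt continuous_fst continuous_const).inter
      (isOpen_lt continuous_snd continuous_const)
  have hsub : {b : ℝ × ℝ | b.1 < a.1 ∧ b.2 < a.2} ⊆ A := fun b hb =>
    hA a ha2 b ⟨hb.1, hb.2⟩
  have hpint : p ∈ interior A :=
    interior_maximal hsub hopen2 ⟨ha1.1, ha1.2⟩
  exact hp.2 hpint

/-- The frontier of a `≺`-downward-closed subset of ℝ² is a chain under the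
northwest order `◁`. -/
theorem frontier_of_downward_closed_is_nw_chain
    (A : Set (ℝ × ℝ)) (hA : ∀ a ∈ A, ∀ b : ℝ × ℝ, slt b a → b ∈ A) :
    ∀ p ∈ frontier A, ∀ q ∈ frontier A, p ≠ q → nw p q ∨ nw q p := by
  intro p hp q hq hne
  have h1 : ¬ slt p q := not_slt_frontier A hA p q hp hq
  have h2 : ¬ slt q p := not_slt_frontier A hA q p hq hp
  unfold slt at h1 h2
  push_neg at h1 h2
  rcases le_or_gt p.1 q.1 with hx | hx
  · rcases le_or_gt q.2 p.2 with hy | hy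
    · exact Or.inl ⟨hx, hy, hne⟩
    · rcases lt_or_eq_of_le hx with hx' | hx'
      · exact absurd (h1 hx') (not_le.mpr hy)
      · exact Or.inr ⟨hx'.ge, hy.le, hne.symm⟩
  · exact Or.inr ⟨hx.le, h2 hx, hne.symm⟩
end

section
/- Let ≈ be an equivalence relation on the closed unit interval [0,1] ⊆ ℝ such that every equivalence class is a closed subset of ℝ and is order-convex (if a ≈ b and a ≤ c ≤ b then c ≈ a). If not all elements of [0,1] are ≈-equivalent, then the set of x ∈ [0,1] whose equivalence class is the singleton {x} is uncountable. -/
open Set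

namespace UMSC

lemma not_countable_nat_bool : ¬ Countable (ℕ → Bool) := by
  intro h
  obtain ⟨f, hf⟩ := countable_iff_exists_surjective.mp h
  obtain ⟨n, hn⟩ := hf (fun k => ! f k k)
  have := congrFun hn n
  simp at this

variable (r : (Set.Icc (0:ℝ) 1) → (Set.Icc (0:ℝ) 1) → Prop)

def C (x : Set.Icc (0:ℝ) 1) : Set ℝ := Subtype.val '' {y : Set.Icc (0:ℝ) 1 | r y x}

noncomputable def A (x : Set.Icc (0:ℝ) 1) : ℝ := sInf (C r x)
noncomputable def B (x : Set.Icc (0:ℝ) 1) : ℝ := sSup (C r x)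

lemma C_subset (x : Set.Icc (0:ℝ) 1) : C r x ⊆ Set.Icc (0:ℝ) 1 := by
  rintro t ⟨y, -, rfl⟩; exact y.2

lemma mem_C_iff {x y : Set.Icc (0:ℝ) 1} : (y : ℝ) ∈ C r x ↔ r y x := by
  constructor
  · rintro ⟨z, hz, hval⟩
    rwa [Subtype.ext hval] at hz
  · intro h; exact ⟨y, h, rfl⟩


variable {r}

lemma C_ne (hequiv : Equivalence r) (x : Set.Icc (0:ℝ) 1) : (C r x).Nonempty :=
  ⟨x, (mem_C_iff r).mpr (hequiv.refl x)⟩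

lemma A_mem (hequiv : Equivalence r)
    (hclosed : ∀ x : Set.Icc (0:ℝ) 1, IsClosed (Subtype.val '' {y : Set.Icc (0:ℝ) 1 | r y x}))
    (x : Set.Icc (0:ℝ) 1) : A r x ∈ C r x :=
  (hclosed x).csInf_mem (C_ne hequiv x) (BddBelow.mono (C_subset r x) bddBelow_Icc)

lemma B_mem (hequiv : Equivalence r)
    (hclosed : ∀ x : Set.Icc (0:ℝ) 1, IsClosed (Subtype.val '' {y : Set.Icc (0:ℝ) 1 | r y x}))
    (x : Set.Icc (0:ℝ) 1) : B r x ∈ C r x :=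
  (hclosed x).csSup_mem (C_ne hequiv x) (BddAbove.mono (C_subset r x) bddAbove_Icc)

lemma A_le {x : Set.Icc (0:ℝ) 1} {t : ℝ} (ht : t ∈ C r x) : A r x ≤ t :=
  csInf_le (BddBelow.mono (C_subset r x) bddBelow_Icc) ht

lemma le_B {x : Set.Icc (0:ℝ) 1} {t : ℝ} (ht : t ∈ C r x) : t ≤ B r x :=
  le_csSup (BddAbove.mono (C_subset r x) bddAbove_Icc) ht

lemma C_congr (hequiv : Equivalence r) {x y : Set.Icc (0:ℝ) 1} (h : r x y) :
    C r x = C r y := by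
  ext t
  constructor <;> rintro ⟨z, hz, rfl⟩
  · exact ⟨z, hequiv.trans hz h, rfl⟩
  · exact ⟨z, hequiv.trans hz (hequiv.symm h), rfl⟩

lemma A_congr (hequiv : Equivalence r) {x y : Set.Icc (0:ℝ) 1} (h : r x y) :
    A r x = A r y := by unfold A; rw [C_congr hequiv h]

lemma B_congr (hequiv : Equivalence r) {x y : Set.Icc (0:ℝ) 1} (h : r x y) :
    B r x = B r y := by unfold B; rw [C_congr hequiv h]

lemma C_eq_Icc (hequiv : Equivalence r)
    (hclosed : ∀ x : Set.Icc (0:ℝ) 1, IsClosed (Subtype.val '' {y : Set.Icc (0:ℝ) 1 | r y x}))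
    (hconvex : ∀ a b c : Set.Icc (0:ℝ) 1, r a b → a ≤ c → c ≤ b → r c a)
    (x : Set.Icc (0:ℝ) 1) : C r x = Set.Icc (A r x) (B r x) := by
  apply Set.Subset.antisymm
  · intro t ht; exact ⟨A_le ht, le_B ht⟩
  · rintro t ⟨h1, h2⟩
    have hAmem := A_mem hequiv hclosed x
    have hBmem := B_mem hequiv hclosed x
    obtain ⟨ya, hra, hva⟩ := hAmem
    obtain ⟨yb, hrb, hvb⟩ := hBmem
    have htI : t ∈ Set.Icc (0:ℝ) 1 := by
      constructor
      · exact le_trans ya.2.1 (by rw [hva]; exact h1)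
      · exact le_trans (by rw [hvb]; exact h2) yb.2.2
    have hab : r ya yb := hequiv.trans hra (hequiv.symm hrb)
    have h3 : ya ≤ (⟨t, htI⟩ : Set.Icc (0:ℝ) 1) := by
      rw [← Subtype.coe_le_coe]; rw [hva]; exact h1
    have h4 : (⟨t, htI⟩ : Set.Icc (0:ℝ) 1) ≤ yb := by
      rw [← Subtype.coe_le_coe]; rw [hvb]; exact h2
    have := hconvex ya yb ⟨t, htI⟩ hab h3 h4
    exact ⟨⟨t, htI⟩, hequiv.trans this hra, rfl⟩

/-- The set of endpoints of classes. -/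
def K : Set ℝ :=
  {t | ∃ h : t ∈ Set.Icc (0:ℝ) 1, A r ⟨t, h⟩ = t ∨ B r ⟨t, h⟩ = t}

lemma r_of_mem_C (hequiv : Equivalence r) {x : Set.Icc (0:ℝ) 1} {t : ℝ} (ht : t ∈ C r x)
    (h : t ∈ Set.Icc (0:ℝ) 1) : r ⟨t, h⟩ x := by
  obtain ⟨z, hz, hval⟩ := ht
  have : z = ⟨t, h⟩ := Subtype.ext hval
  rwa [← this]

lemma A_mem_K (hequiv : Equivalence r)
    (hclosed : ∀ x : Set.Icc (0:ℝ) 1, IsClosed (Subtype.val '' {y : Set.Icc (0:ℝ) 1 | r y x}))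
    (x : Set.Icc (0:ℝ) 1) : A r x ∈ K (r := r) := by
  have hmem := A_mem hequiv hclosed x
  have hI : A r x ∈ Set.Icc (0:ℝ) 1 := C_subset r x hmem
  refine ⟨hI, Or.inl ?_⟩
  have hr : r ⟨A r x, hI⟩ x := r_of_mem_C hequiv hmem hI
  rw [A_congr hequiv hr]

lemma B_mem_K (hequiv : Equivalence r)
    (hclosed : ∀ x : Set.Icc (0:ℝ) 1, IsClosed (Subtype.val '' {y : Set.Icc (0:ℝ) 1 | r y x}))
    (x : Set.Icc (0:ℝ) 1) : B r x ∈ K (r := r) := by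
  have hmem := B_mem hequiv hclosed x
  have hI : B r x ∈ Set.Icc (0:ℝ) 1 := C_subset r x hmem
  refine ⟨hI, Or.inr ?_⟩
  have hr : r ⟨B r x, hI⟩ x := r_of_mem_C hequiv hmem hI
  rw [B_congr hequiv hr]


lemma coe_mem_C (hequiv : Equivalence r) {t : ℝ} (h : t ∈ Set.Icc (0:ℝ) 1) :
    t ∈ C r ⟨t, h⟩ := ⟨⟨t, h⟩, hequiv.refl _, rfl⟩

lemma K_eq (hequiv : Equivalence r)
    (hclosed : ∀ x : Set.Icc (0:ℝ) 1, IsClosed (Subtype.val '' {y : Set.Icc (0:ℝ) 1 | r y x}))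
    (hconvex : ∀ a b c : Set.Icc (0:ℝ) 1, r a b → a ≤ c → c ≤ b → r c a) :
    K (r := r) =
      Set.Icc (0:ℝ) 1 ∩ (⋃ x : Set.Icc (0:ℝ) 1, Set.Ioo (A r x) (B r x))ᶜ := by
  ext t
  constructor
  · rintro ⟨h, hd⟩
    refine ⟨h, ?_⟩
    intro hmem
    simp only [Set.mem_iUnion] at hmem
    obtain ⟨x, hx1, hx2⟩ := hmem
    have htC : t ∈ C r x := by
      rw [C_eq_Icc hequiv hclosed hconvex]
      exact ⟨le_of_lt hx1, le_of_lt hx2⟩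
    have hr : r ⟨t, h⟩ x := r_of_mem_C hequiv htC h
    rcases hd with hd | hd
    · rw [A_congr hequiv hr] at hd; exact absurd hd (ne_of_lt hx1)
    · rw [B_congr hequiv hr] at hd; exact absurd hd (ne_of_gt hx2)
  · rintro ⟨h, hn⟩
    refine ⟨h, ?_⟩
    have htC : t ∈ C r ⟨t, h⟩ := coe_mem_C hequiv h
    have h1 : A r ⟨t, h⟩ ≤ t := A_le htC
    have h2 : t ≤ B r ⟨t, h⟩ := le_B htC
    by_contra hcon
    push_neg at hcon
    apply hn
    simp only [Set.mem_iUnion]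
    exact ⟨⟨t, h⟩, lt_of_le_of_ne h1 hcon.1, lt_of_le_of_ne h2 (fun hh => hcon.2 hh.symm)⟩

lemma K_isClosed (hequiv : Equivalence r)
    (hclosed : ∀ x : Set.Icc (0:ℝ) 1, IsClosed (Subtype.val '' {y : Set.Icc (0:ℝ) 1 | r y x}))
    (hconvex : ∀ a b c : Set.Icc (0:ℝ) 1, r a b → a ≤ c → c ≤ b → r c a) :
    IsClosed (K (r := r)) := by
  rw [K_eq hequiv hclosed hconvex]
  exact isClosed_Icc.inter (isOpen_iUnion fun x => isOpen_Ioo).isClosed_compl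

lemma K_subset : K (r := r) ⊆ Set.Icc (0:ℝ) 1 := fun t ht => ht.1

lemma exists_right (hequiv : Equivalence r)
    (hclosed : ∀ x : Set.Icc (0:ℝ) 1, IsClosed (Subtype.val '' {y : Set.Icc (0:ℝ) 1 | r y x}))
    (hconvex : ∀ a b c : Set.Icc (0:ℝ) 1, r a b → a ≤ c → c ≤ b → r c a)
    {t : ℝ} (h : t ∈ Set.Icc (0:ℝ) 1) (hB : B r ⟨t, h⟩ = t) (ht1 : t < 1)
    {ε : ℝ} (hε : 0 < ε) : ∃ s ∈ K (r := r), t < s ∧ s < t + ε ∧ s < 1 := by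
  set y := min (t + ε / 2) ((t + 1) / 2) with hy
  have hty : t < y := lt_min (by linarith) (by linarith)
  have hy1 : y < 1 := lt_of_le_of_lt (min_le_right _ _) (by linarith)
  have hyε : y < t + ε := lt_of_le_of_lt (min_le_left _ _) (by linarith)
  have hyI : y ∈ Set.Icc (0:ℝ) 1 := ⟨le_trans h.1 (le_of_lt hty), le_of_lt hy1⟩
  refine ⟨A r ⟨y, hyI⟩, A_mem_K hequiv hclosed _, ?_, ?_, ?_⟩
  · by_contra hle
    push_neg at hle
    have htmem : t ∈ C r ⟨y, hyI⟩ := by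
      rw [C_eq_Icc hequiv hclosed hconvex]
      exact ⟨hle, le_trans (le_of_lt hty) (le_B (coe_mem_C hequiv hyI))⟩
    have hr : r ⟨t, h⟩ ⟨y, hyI⟩ := r_of_mem_C hequiv htmem h
    have : y ≤ B r ⟨t, h⟩ := by
      rw [B_congr hequiv hr]; exact le_B (coe_mem_C hequiv hyI)
    rw [hB] at this; linarith
  · exact lt_of_le_of_lt (A_le (coe_mem_C hequiv hyI)) hyε
  · exact lt_of_le_of_lt (A_le (coe_mem_C hequiv hyI)) hy1

lemma exists_left (hequiv : Equivalence r)
    (hclosed : ∀ x : Set.Icc (0:ℝ) 1, IsClosed (Subtype.val '' {y : Set.Icc (0:ℝ) 1 | r y x}))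
    (hconvex : ∀ a b c : Set.Icc (0:ℝ) 1, r a b → a ≤ c → c ≤ b → r c a)
    {t : ℝ} (h : t ∈ Set.Icc (0:ℝ) 1) (hA : A r ⟨t, h⟩ = t) (ht0 : 0 < t)
    {ε : ℝ} (hε : 0 < ε) : ∃ s ∈ K (r := r), t - ε < s ∧ s < t ∧ 0 < s := by
  set y := max (t - ε / 2) (t / 2) with hy
  have hty : y < t := max_lt (by linarith) (by linarith)
  have hy0 : 0 < y := lt_of_lt_of_le (by linarith) (le_max_right _ _)
  have hyε : t - ε < y := lt_of_lt_of_le (by linarith) (le_max_left _ _)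
  have hyI : y ∈ Set.Icc (0:ℝ) 1 := ⟨le_of_lt hy0, le_trans (le_of_lt hty) h.2⟩
  refine ⟨B r ⟨y, hyI⟩, B_mem_K hequiv hclosed _, ?_, ?_, ?_⟩
  · exact lt_of_lt_of_le hyε (le_B (coe_mem_C hequiv hyI))
  · by_contra hle
    push_neg at hle
    have htmem : t ∈ C r ⟨y, hyI⟩ := by
      rw [C_eq_Icc hequiv hclosed hconvex]
      exact ⟨le_trans (A_le (coe_mem_C hequiv hyI)) (le_of_lt hty), hle⟩
    have hr : r ⟨t, h⟩ ⟨y, hyI⟩ := r_of_mem_C hequiv htmem h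
    have : A r ⟨t, h⟩ ≤ y := by
      rw [A_congr hequiv hr]; exact A_le (coe_mem_C hequiv hyI)
    rw [hA] at this; linarith
  · exact lt_of_lt_of_le hy0 (le_B (coe_mem_C hequiv hyI))


/-- Endpoints of nondegenerate classes. -/
def E : Set ℝ :=
  {t | ∃ h : t ∈ Set.Icc (0:ℝ) 1,
    A r ⟨t, h⟩ < B r ⟨t, h⟩ ∧ (A r ⟨t, h⟩ = t ∨ B r ⟨t, h⟩ = t)}

noncomputable def g (x : Set.Icc (0:ℝ) 1) : ℚ :=
  if h : A r x < B r x then Classical.choose (exists_rat_btwn h) else 0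

lemma g_spec {x : Set.Icc (0:ℝ) 1} (h : A r x < B r x) :
    A r x < (g (r := r) x : ℝ) ∧ (g (r := r) x : ℝ) < B r x := by
  rw [g, dif_pos h]
  exact Classical.choose_spec (exists_rat_btwn h)

noncomputable def F (t : ℝ) : ℚ × Bool :=
  if h : t ∈ Set.Icc (0:ℝ) 1 then (g (r := r) ⟨t, h⟩, decide (A r ⟨t, h⟩ = t))
  else (0, true)

lemma E_countable (hequiv : Equivalence r)
    (hclosed : ∀ x : Set.Icc (0:ℝ) 1, IsClosed (Subtype.val '' {y : Set.Icc (0:ℝ) 1 | r y x}))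
    (hconvex : ∀ a b c : Set.Icc (0:ℝ) 1, r a b → a ≤ c → c ≤ b → r c a) :
    Set.Countable (E (r := r)) := by
  apply Set.countable_of_injective_of_countable_image
    (f := F (r := r)) ?_ (Set.to_countable _)
  rintro t ⟨h, hab, hd⟩ t' ⟨h', hab', hd'⟩ heq
  rw [F, F, dif_pos h, dif_pos h'] at heq
  have h1 : g (r := r) ⟨t, h⟩ = g (r := r) ⟨t', h'⟩ := congrArg Prod.fst heq
  have h2 : (A r ⟨t, h⟩ = t) ↔ (A r ⟨t', h'⟩ = t') := by
    have := congrArg Prod.snd heq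
    simpa using this
  obtain ⟨hq1, hq2⟩ := g_spec (r := r) hab
  obtain ⟨hq1', hq2'⟩ := g_spec (r := r) hab'
  rw [h1] at hq1 hq2
  set q : ℝ := (g (r := r) ⟨t', h'⟩ : ℝ) with hqdef
  have hqC : q ∈ C r ⟨t, h⟩ := by
    rw [C_eq_Icc hequiv hclosed hconvex]
    exact ⟨le_of_lt hq1, le_of_lt hq2⟩
  have hqC' : q ∈ C r ⟨t', h'⟩ := by
    rw [C_eq_Icc hequiv hclosed hconvex]
    exact ⟨le_of_lt hq1', le_of_lt hq2'⟩
  have hqI : q ∈ Set.Icc (0:ℝ) 1 := C_subset r _ hqC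
  have hr1 : r ⟨q, hqI⟩ ⟨t, h⟩ := r_of_mem_C hequiv hqC hqI
  have hr2 : r ⟨q, hqI⟩ ⟨t', h'⟩ := r_of_mem_C hequiv hqC' hqI
  have hr : r (⟨t, h⟩ : Set.Icc (0:ℝ) 1) ⟨t', h'⟩ :=
    hequiv.trans (hequiv.symm hr1) hr2
  have hA : A r ⟨t, h⟩ = A r ⟨t', h'⟩ := A_congr hequiv hr
  have hB : B r ⟨t, h⟩ = B r ⟨t', h'⟩ := B_congr hequiv hr
  by_cases hc : A r ⟨t, h⟩ = t
  · rw [← hc, hA, h2.mp hc]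
  · have ht : B r ⟨t, h⟩ = t := hd.resolve_left hc
    have hc' : ¬ A r ⟨t', h'⟩ = t' := fun hh => hc (h2.mpr hh)
    have ht' : B r ⟨t', h'⟩ = t' := hd'.resolve_left hc'
    rw [← ht, hB, ht']

lemma K_countable (hequiv : Equivalence r)
    (hclosed : ∀ x : Set.Icc (0:ℝ) 1, IsClosed (Subtype.val '' {y : Set.Icc (0:ℝ) 1 | r y x}))
    (hconvex : ∀ a b c : Set.Icc (0:ℝ) 1, r a b → a ≤ c → c ≤ b → r c a)
    (hS : Set.Countable {x : Set.Icc (0:ℝ) 1 | ∀ y : Set.Icc (0:ℝ) 1, r y x → y = x}) :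
    Set.Countable (K (r := r)) := by
  have hsub : K (r := r) ⊆
      (Subtype.val '' {x : Set.Icc (0:ℝ) 1 | ∀ y : Set.Icc (0:ℝ) 1, r y x → y = x})
        ∪ E (r := r) := by
    rintro t ⟨h, hd⟩
    have htC : t ∈ C r ⟨t, h⟩ := coe_mem_C hequiv h
    have h1 : A r ⟨t, h⟩ ≤ t := A_le htC
    have h2 : t ≤ B r ⟨t, h⟩ := le_B htC
    rcases lt_or_eq_of_le (le_trans h1 h2) with hab | hab
    · exact Or.inr ⟨h, hab, hd⟩
    · left
      refine ⟨⟨t, h⟩, ?_, rfl⟩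
      intro y hy
      have : (y : ℝ) ∈ C r ⟨t, h⟩ := (mem_C_iff r).mpr hy
      rw [C_eq_Icc hequiv hclosed hconvex] at this
      have hAt : A r ⟨t, h⟩ = t := le_antisymm h1 (by rw [hab]; exact h2)
      have hBt : B r ⟨t, h⟩ = t := by rw [← hab, hAt]
      apply Subtype.ext
      have := this
      rw [hAt, hBt] at this
      exact le_antisymm this.2 this.1
  exact Set.Countable.mono hsub ((hS.image _).union (E_countable hequiv hclosed hconvex))

end UMSC

open UMSC in
/-- If an equivalence relation on `[0,1]` has all classes closed (in ℝ) and order-convex,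
and not all points are equivalent, then uncountably many points have singleton classes. -/
theorem uncountably_many_singleton_classes
    (r : (Set.Icc (0:ℝ) 1) → (Set.Icc (0:ℝ) 1) → Prop)
    (hequiv : Equivalence r)
    (hclosed : ∀ x : Set.Icc (0:ℝ) 1, IsClosed (Subtype.val '' {y : Set.Icc (0:ℝ) 1 | r y x}))
    (hconvex : ∀ a b c : Set.Icc (0:ℝ) 1, r a b → a ≤ c → c ≤ b → r c a)
    (hnotall : ¬ ∀ a b : Set.Icc (0:ℝ) 1, r a b) :
    ¬ Set.Countable {x : Set.Icc (0:ℝ) 1 | ∀ y : Set.Icc (0:ℝ) 1, r y x → y = x} := by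
  intro hS
  have h0 : (0:ℝ) ∈ Set.Icc (0:ℝ) 1 := by norm_num
  have h1 : (1:ℝ) ∈ Set.Icc (0:ℝ) 1 := by norm_num
  set x0 : Set.Icc (0:ℝ) 1 := ⟨0, h0⟩ with hx0
  set x1 : Set.Icc (0:ℝ) 1 := ⟨1, h1⟩ with hx1
  -- 0 and 1 are not related
  have hr01 : ¬ r x1 x0 := by
    intro hr
    apply hnotall
    have hC : C r x0 = Set.Icc (0:ℝ) 1 := by
      apply Set.Subset.antisymm (C_subset r x0)
      have hA0 : A r x0 = 0 :=
        le_antisymm (A_le (coe_mem_C hequiv h0)) (C_subset r x0 (A_mem hequiv hclosed x0)).1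
      have hB1 : B r x0 = 1 :=
        le_antisymm (C_subset r x0 (B_mem hequiv hclosed x0)).2
          (le_B ((mem_C_iff r).mpr hr))
      rw [C_eq_Icc hequiv hclosed hconvex, hA0, hB1]
    have hall : ∀ a : Set.Icc (0:ℝ) 1, r a x0 := by
      intro a
      have : (a : ℝ) ∈ C r x0 := by rw [hC]; exact a.2
      have := r_of_mem_C hequiv this a.2
      exact this
    exact fun a b => hequiv.trans (hall a) (hequiv.symm (hall b))
  have hKcount := K_countable hequiv hclosed hconvex hS
  have hKclosed := K_isClosed hequiv hclosed hconvex
  -- an element of K strictly inside (0,1)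
  have hinner : ∃ s ∈ K (r := r), 0 < s ∧ s < 1 := by
    have hB0le : B r x0 ≤ 1 := (C_subset r x0 (B_mem hequiv hclosed x0)).2
    have hB0lt : B r x0 < 1 := by
      rcases lt_or_eq_of_le hB0le with hlt | heq
      · exact hlt
      · exfalso
        have : (1:ℝ) ∈ C r x0 := by rw [← heq]; exact B_mem hequiv hclosed x0
        exact hr01 (r_of_mem_C hequiv this h1)
    have hB0ge : 0 ≤ B r x0 := (C_subset r x0 (B_mem hequiv hclosed x0)).1
    rcases lt_or_eq_of_le hB0ge with hpos | hzero
    · exact ⟨B r x0, B_mem_K hequiv hclosed x0, hpos, hB0lt⟩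
    · obtain ⟨s, hsK, hs0, -, hs1⟩ :=
        exists_right hequiv hclosed hconvex h0 hzero.symm (by norm_num) (ε := 1) one_pos
      exact ⟨s, hsK, hs0, hs1⟩
  -- the perfect kernel
  set K2 : Set ℝ := closure (K (r := r) \ {0, 1}) with hK2
  have hK2K : K2 ⊆ K (r := r) := by
    have h := closure_mono (Set.diff_subset (s := K (r := r)) (t := {0, 1}))
    rwa [hKclosed.closure_eq] at h
  have hK2ne : K2.Nonempty := by
    obtain ⟨s, hsK, hs0, hs1⟩ := hinner
    exact ⟨s, subset_closure ⟨hsK, by simp [ne_of_gt hs0, ne_of_lt hs1]⟩⟩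
  have hK2perf : Perfect K2 := by
    refine ⟨isClosed_closure, ?_⟩
    intro p hp
    rw [accPt_iff_nhds]
    intro U hU
    obtain ⟨δ, δpos, hball⟩ := Metric.mem_nhds_iff.mp hU
    by_cases hpmem : p ∈ K (r := r) \ {0, 1}
    · obtain ⟨⟨h, hd⟩, hp01⟩ := hpmem
      simp only [Set.mem_insert_iff, Set.mem_singleton_iff, not_or] at hp01
      have hp0 : 0 < p := lt_of_le_of_ne h.1 (Ne.symm hp01.1)
      have hp1 : p < 1 := lt_of_le_of_ne h.2 hp01.2
      rcases hd with hA | hB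
      · obtain ⟨s, hsK, hs1, hs2, hs3⟩ :=
          exists_left hequiv hclosed hconvex h hA hp0 δpos
        refine ⟨s, ⟨hball ?_, subset_closure ⟨hsK, ?_⟩⟩, ne_of_lt hs2⟩
        · rw [Metric.mem_ball, Real.dist_eq, abs_lt]; constructor <;> linarith
        · simp only [Set.mem_insert_iff, Set.mem_singleton_iff, not_or]
          exact ⟨ne_of_gt hs3, ne_of_lt (lt_trans hs2 hp1)⟩
      · obtain ⟨s, hsK, hs1, hs2, hs3⟩ :=
          exists_right hequiv hclosed hconvex h hB hp1 δpos
        refine ⟨s, ⟨hball ?_, subset_closure ⟨hsK, ?_⟩⟩, Ne.symm (ne_of_lt hs1)⟩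
        · rw [Metric.mem_ball, Real.dist_eq, abs_lt]; constructor <;> linarith
        · simp only [Set.mem_insert_iff, Set.mem_singleton_iff, not_or]
          exact ⟨ne_of_gt (lt_trans hp0 hs1), ne_of_lt hs3⟩
    · obtain ⟨y, hy1, hy2⟩ :=
        Metric.mem_closure_iff.mp hp δ δpos
      refine ⟨y, ⟨hball ?_, subset_closure hy1⟩, fun hyp => hpmem (hyp ▸ hy1)⟩
      rw [Metric.mem_ball, dist_comm]
      exact hy2
  obtain ⟨f, hrange, -, hinj⟩ := hK2perf.exists_nat_bool_injection hK2ne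
  have hc : (Set.range f).Countable := (hKcount.mono hK2K).mono hrange
  have : Countable (ℕ → Bool) := by
    have := hc.to_subtype
    exact Countable.of_equiv _ (Equiv.ofInjective f hinj).symm
  exact not_countable_nat_bool this
end
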